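/- For every complex s with Re s > 0, the improper Laplace integral ∫_0^∞ e^{-sx} ψ₁(e^x) dx converges and equals −ζ'(s+1)/(s·ζ(s+1)), where ψ₁(y) = Σ_{p^k ≤ y} (log p)/p^k. -/

import Mathlib

/-! On `[0, T]` the function `x ↦ ψ₁(eˣ)` is the finite step function
`∑_{n ≤ e^T} (Λ(n)/n) · 1[log n ≤ x]`, so the integral is a finite sum of elementary exponential
integrals, and it equals `(∑_{n ≤ e^T} Λ(n) n^{-(s+1)} - e^{-sT} ψ₁(e^T)) / s`. As `T → ∞` the sum
tends to the L-series of `Λ` at `s + 1`, which is `-ζ'(s+1)/ζ(s+1)`, while the boundary term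
vanishes because `ψ₁(e^T) ≤ T (1 + T)` grows only polynomially. -/

open Filter ArithmeticFunction MeasureTheory

/-- `ψ₁(y) = ∑_{n ≤ y} Λ(n)/n = ∑_{p^k ≤ y} (log p)/p^k`. -/
noncomputable def chebyshevPsi1 (y : ℝ) : ℝ :=
  ∑ n ∈ Finset.Icc 1 ⌊y⌋₊, Λ n / n

open Set

theorem intervalIntegral.integral_indicator_Ici {E : Type*} [NormedAddCommGroup E]
    [NormedSpace ℝ E] {f : ℝ → E} {a b c : ℝ} (hab : a ≤ b) (hbc : b ≤ c) :
    ∫ x in a..c, (Ici b).indicator f x = ∫ x in b..c, f x := by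
  have hset : (Ici b ∩ Ioc a c : Set ℝ) =ᵐ[volume] Ioc b c := by
    refine ((Ioi_ae_eq_Ici (a := b)).symm.inter (EventuallyEq.refl _ (Ioc a c))).trans
      (EventuallyEq.of_eq ?_)
    rw [inter_comm, Ioc_inter_Ioi, sup_eq_right.2 hab]
  rw [intervalIntegral.integral_of_le (hab.trans hbc), intervalIntegral.integral_of_le hbc,
    MeasureTheory.integral_indicator measurableSet_Ici, Measure.restrict_restrict measurableSet_Ici,
    setIntegral_congr_set hset]

theorem sum_Icc_floor_exp_eq_sum_indicator {M : Type*} [AddCommMonoid M] (w : ℕ → M)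
    {x T : ℝ} (hxT : x ≤ T) :
    ∑ n ∈ Finset.Icc 1 ⌊Real.exp x⌋₊, w n =
      ∑ n ∈ Finset.Icc 1 ⌊Real.exp T⌋₊, (Ici (Real.log n)).indicator (fun _ => w n) x := by
  have hfilter : Finset.Icc 1 ⌊Real.exp x⌋₊ =
      (Finset.Icc 1 ⌊Real.exp T⌋₊).filter (fun n : ℕ => Real.log n ≤ x) := by
    ext n
    simp only [Finset.mem_Icc, Finset.mem_filter]
    have hmono : ⌊Real.exp x⌋₊ ≤ ⌊Real.exp T⌋₊ := Nat.floor_le_floor (Real.exp_le_exp.2 hxT)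
    have hlog : ∀ {n : ℕ}, 1 ≤ n → (n ≤ ⌊Real.exp x⌋₊ ↔ Real.log n ≤ x) := fun hn => by
      rw [Nat.le_floor_iff (Real.exp_pos x).le,
        Real.log_le_iff_le_exp (by exact_mod_cast hn)]
    constructor
    · rintro ⟨h1, hn⟩
      exact ⟨⟨h1, hn.trans hmono⟩, (hlog h1).1 hn⟩
    · rintro ⟨⟨h1, -⟩, hn⟩
      exact ⟨h1, (hlog h1).2 hn⟩
  rw [hfilter, Finset.sum_filter]
  rfl

theorem integral_cexp_neg_mul_indicator_Ici_const {s : ℂ} (hs : s ≠ 0) {a T : ℝ} (ha : 0 ≤ a)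
    (haT : a ≤ T) (c : ℂ) :
    ∫ x in (0:ℝ)..T, (Ici a).indicator (fun x : ℝ => Complex.exp (-s * x) * c) x =
      (Complex.exp (-s * a) * c - Complex.exp (-s * T) * c) / s := by
  rw [intervalIntegral.integral_indicator_Ici ha haT, intervalIntegral.integral_mul_const,
    integral_exp_mul_complex (neg_ne_zero.2 hs)]
  field_simp
  ring

theorem integral_cexp_neg_mul_sum_Icc_floor_exp (w : ℕ → ℂ) {s : ℂ} (hs : s ≠ 0) {T : ℝ}
    (hT : 0 ≤ T) :
    ∫ x in (0:ℝ)..T, Complex.exp (-s * x) * ∑ n ∈ Finset.Icc 1 ⌊Real.exp x⌋₊, w n =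
      (∑ n ∈ Finset.Icc 1 ⌊Real.exp T⌋₊, w n * (n : ℂ) ^ (-s) -
        Complex.exp (-s * T) * ∑ n ∈ Finset.Icc 1 ⌊Real.exp T⌋₊, w n) / s := by
  set N := ⌊Real.exp T⌋₊
  have hlog : ∀ n ∈ Finset.Icc 1 N, 0 ≤ Real.log n ∧ Real.log n ≤ T := fun n hn => by
    obtain ⟨h1, hN⟩ := Finset.mem_Icc.1 hn
    refine ⟨Real.log_nonneg (by exact_mod_cast h1), ?_⟩
    rw [Real.log_le_iff_le_exp (by exact_mod_cast h1)]
    exact (Nat.le_floor_iff (Real.exp_pos T).le).1 hN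
  have hcpow : ∀ n ∈ Finset.Icc 1 N, Complex.exp (-s * Real.log n) = (n : ℂ) ^ (-s) :=
    fun n hn => by
      have hn0 : n ≠ 0 := Nat.one_le_iff_ne_zero.1 (Finset.mem_Icc.1 hn).1
      rw [Complex.cpow_def_of_ne_zero (Nat.cast_ne_zero.2 hn0),
        Complex.natCast_log, mul_comm]
  calc ∫ x in (0:ℝ)..T, Complex.exp (-s * x) * ∑ n ∈ Finset.Icc 1 ⌊Real.exp x⌋₊, w n
      = ∫ x in (0:ℝ)..T, ∑ n ∈ Finset.Icc 1 N,
          (Ici (Real.log n)).indicator (fun x : ℝ => Complex.exp (-s * x) * w n) x := by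
        refine intervalIntegral.integral_congr fun x hx => ?_
        simp only [sum_Icc_floor_exp_eq_sum_indicator w (uIcc_of_le hT ▸ hx).2,
          Finset.mul_sum, indicator_mul_right]
        rfl
    _ = ∑ n ∈ Finset.Icc 1 N, ∫ x in (0:ℝ)..T,
          (Ici (Real.log n)).indicator (fun x : ℝ => Complex.exp (-s * x) * w n) x := by
        refine intervalIntegral.integral_finsetSum fun n _ => ?_
        rw [intervalIntegrable_iff]
        exact (Continuous.integrableOn_uIoc (by fun_prop)).indicator measurableSet_Ici
    _ = ∑ n ∈ Finset.Icc 1 N, (w n * (n : ℂ) ^ (-s) - Complex.exp (-s * T) * w n) / s := by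
        refine Finset.sum_congr rfl fun n hn => ?_
        rw [integral_cexp_neg_mul_indicator_Ici_const hs (hlog n hn).1 (hlog n hn).2,
          hcpow n hn, mul_comm (w n)]
    _ = _ := by rw [← Finset.sum_div, Finset.sum_sub_distrib, Finset.mul_sum]

theorem LSeries.term_add_one (f : ℕ → ℂ) (s : ℂ) {n : ℕ} (hn : n ≠ 0) :
    LSeries.term f (s + 1) n = f n / n * (n : ℂ) ^ (-s) := by
  have hnc : (n : ℂ) ≠ 0 := Nat.cast_ne_zero.2 hn
  rw [LSeries.term_of_ne_zero hn, Complex.cpow_add _ _ hnc, Complex.cpow_one, Complex.cpow_neg]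
  field_simp

theorem LSeriesHasSum.tendsto_sum_Icc {f : ℕ → ℂ} {s L : ℂ} (h : LSeriesHasSum f s L) :
    Tendsto (fun N => ∑ n ∈ Finset.Icc 1 N, LSeries.term f s n) atTop (nhds L) := by
  have hrange : ∀ N : ℕ, ∑ n ∈ Finset.range (N + 1), LSeries.term f s n =
      ∑ n ∈ Finset.Icc 1 N, LSeries.term f s n := fun N => by
    rw [Finset.range_eq_Ico, Finset.sum_eq_sum_Ico_succ_bot N.succ_pos, LSeries.term_zero,
      zero_add, zero_add, Nat.succ_eq_add_one, Finset.Ico_add_one_right_eq_Icc]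
  simpa only [hrange] using (tendsto_add_atTop_iff_nat 1).2 h.tendsto_sum_nat

theorem chebyshevPsi1_nonneg (y : ℝ) : 0 ≤ chebyshevPsi1 y :=
  Finset.sum_nonneg fun _ _ => div_nonneg vonMangoldt_nonneg (Nat.cast_nonneg _)

theorem chebyshevPsi1_le {y : ℝ} (hy : 1 ≤ y) :
    chebyshevPsi1 y ≤ Real.log y * (1 + Real.log y) := by
  have hlog : 0 ≤ Real.log y := Real.log_nonneg hy
  have hfloor : (⌊y⌋₊ : ℝ) ≤ y := Nat.floor_le (by linarith)
  calc chebyshevPsi1 y ≤ ∑ n ∈ Finset.Icc 1 ⌊y⌋₊, Real.log y * (n : ℝ)⁻¹ := by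
        refine Finset.sum_le_sum fun n hn => ?_
        obtain ⟨h1, hN⟩ := Finset.mem_Icc.1 hn
        have hny : (n : ℝ) ≤ y := le_trans (by exact_mod_cast hN) hfloor
        rw [div_eq_mul_inv]
        gcongr
        exact vonMangoldt_le_log.trans (Real.log_le_log (Nat.cast_pos.2 h1) hny)
    _ = Real.log y * harmonic ⌊y⌋₊ := by
        rw [← Finset.mul_sum, harmonic_eq_sum_Icc]; push_cast; rfl
    _ ≤ Real.log y * (1 + Real.log y) := by
        gcongr
        refine (harmonic_le_one_add_log _).trans ?_
        gcongr
        exact Nat.cast_pos.2 (Nat.floor_pos.2 hy)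

theorem tendsto_cexp_neg_mul_mul_chebyshevPsi1_exp {s : ℂ} (hs : 0 < s.re) :
    Tendsto (fun T : ℝ => Complex.exp (-s * T) * (chebyshevPsi1 (Real.exp T) : ℂ)) atTop
      (nhds 0) := by
  have hdecay := (tendsto_rpow_mul_exp_neg_mul_atTop_nhds_zero 1 _ hs).add
    (tendsto_rpow_mul_exp_neg_mul_atTop_nhds_zero 2 _ hs)
  rw [add_zero] at hdecay
  refine squeeze_zero_norm' ?_ hdecay
  filter_upwards [eventually_ge_atTop 0] with T hT
  rw [norm_mul, Complex.norm_exp, Complex.norm_real, Real.norm_of_nonneg (chebyshevPsi1_nonneg _),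
    Real.rpow_one, Real.rpow_two]
  have := chebyshevPsi1_le (Real.one_le_exp hT)
  rw [Real.log_exp] at this
  have hre : (-s * T).re = -s.re * T := by simp
  rw [hre]
  nlinarith [Real.exp_pos (-s.re * T)]

theorem stmt11 (s : ℂ) (hs : 0 < s.re) :
    Tendsto (fun T : ℝ =>
        ∫ x in (0:ℝ)..T, Complex.exp (-s * x) * (chebyshevPsi1 (Real.exp x) : ℂ))
      atTop
      (nhds (-(deriv riemannZeta (s + 1)) / (s * riemannZeta (s + 1)))) := by
  have hs1 : 1 < (s + 1).re := by simp [hs]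
  have hψ (y : ℝ) : (chebyshevPsi1 y : ℂ) = ∑ n ∈ Finset.Icc 1 ⌊y⌋₊, (Λ n : ℂ) / n := by
    simp [chebyshevPsi1]
  have hterm (N : ℕ) : ∑ n ∈ Finset.Icc 1 N, (Λ n : ℂ) / n * (n : ℂ) ^ (-s) =
      ∑ n ∈ Finset.Icc 1 N, LSeries.term (fun n => (Λ n : ℂ)) (s + 1) n :=
    Finset.sum_congr rfl fun n hn =>
      (LSeries.term_add_one (fun n => (Λ n : ℂ)) s
        (Nat.one_le_iff_ne_zero.1 (Finset.mem_Icc.1 hn).1)).symm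
  have hintegral : ∀ᶠ T in atTop,
      ∫ x in (0:ℝ)..T, Complex.exp (-s * x) * (chebyshevPsi1 (Real.exp x) : ℂ) =
        (∑ n ∈ Finset.Icc 1 ⌊Real.exp T⌋₊, LSeries.term (fun n => (Λ n : ℂ)) (s + 1) n -
          Complex.exp (-s * T) * (chebyshevPsi1 (Real.exp T) : ℂ)) / s := by
    filter_upwards [eventually_ge_atTop 0] with T hT
    simp only [hψ, ← hterm]
    exact integral_cexp_neg_mul_sum_Icc_floor_exp _ (Complex.ne_zero_of_re_pos hs) hT
  have hpartial := (LSeriesSummable_vonMangoldt hs1).LSeriesHasSum.tendsto_sum_Icc.comp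
    (tendsto_nat_floor_atTop.comp Real.tendsto_exp_atTop)
  have hlim := (hpartial.sub (tendsto_cexp_neg_mul_mul_chebyshevPsi1_exp hs)).div_const s
  rw [sub_zero, LSeries_vonMangoldt_eq_deriv_riemannZeta_div hs1, div_div, mul_comm] at hlim
  exact hlim.congr' (hintegral.mono fun _ h => h.symm)
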